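/- Let A be a dilation matrix for ℤ^n with smallest singular value μ > 2, and let D = A([-1/2,1/2)^n) ∩ ℤ^n. Then A yields a radix representation with digit set D: for every x ∈ ℤ^n there exist N ≥ 0 and digits d₀, …, d_N ∈ D with x = Σ_{j=0}^{N} A^j d_j. -/

import Mathlib

open MeasureTheory Set

/-- `A` is a dilation matrix: an integer matrix all of whose complex
eigenvalues have absolute value greater than 1. -/
def IsDilation {n : ℕ} (A : Matrix (Fin n) (Fin n) ℤ) : Prop :=
  ∀ μ ∈ spectrum ℂ (A.map (Int.cast : ℤ → ℂ)), 1 < ‖μ‖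

/-- `D` is a complete set of coset representatives of `ℤ^n / A(ℤ^n)`. -/
def IsDigitSet {n : ℕ} (A : Matrix (Fin n) (Fin n) ℤ) (D : Set (Fin n → ℤ)) : Prop :=
  ∀ x : Fin n → ℤ, ∃! d : Fin n → ℤ, d ∈ D ∧ ∃ y : Fin n → ℤ, x = A.mulVec y + d

/-- The real matrix corresponding to an integer matrix. -/
noncomputable def realMat {n : ℕ} (A : Matrix (Fin n) (Fin n) ℤ) :
    Matrix (Fin n) (Fin n) ℝ :=
  A.map (Int.cast : ℤ → ℝ)

/-- Cast an integer vector to a real vector. -/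
def castVec {n : ℕ} (d : Fin n → ℤ) : Fin n → ℝ := fun i => (d i : ℝ)

/-- The self-affine set `T(A,D) = { Σ_{j=1}^∞ A^{-j} d_j : d_j ∈ D }`. -/
noncomputable def Tile {n : ℕ} (A : Matrix (Fin n) (Fin n) ℤ) (D : Set (Fin n → ℤ)) :
    Set (Fin n → ℝ) :=
  { x | ∃ f : ℕ → (Fin n → ℤ), (∀ j, f j ∈ D) ∧
      HasSum (fun j => ((realMat A)⁻¹ ^ (j + 1)).mulVec (castVec (f j))) x }

/-- `A` yields a radix representation with digit set `D`: every integer vector is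
a finite sum `Σ_{j=0}^N A^j d_j` with digits in `D`. -/
def YieldsRadix {n : ℕ} (A : Matrix (Fin n) (Fin n) ℤ) (D : Set (Fin n → ℤ)) : Prop :=
  ∀ x : Fin n → ℤ, ∃ N : ℕ, ∃ d : ℕ → (Fin n → ℤ), (∀ j ≤ N, d j ∈ D) ∧
    x = ∑ j ∈ Finset.range (N + 1), (A ^ j).mulVec (d j)

/-- The canonical fundamental domain `F = [-1/2, 1/2)^n`. -/
def Fdom (n : ℕ) : Set (Fin n → ℝ) :=
  Set.univ.pi fun _ => Set.Ico (-(1/2) : ℝ) (1/2)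

/-- The digit set `A(F) ∩ ℤ^n`, viewed as a set of integer vectors. -/
noncomputable def digitF {n : ℕ} (A : Matrix (Fin n) (Fin n) ℤ) : Set (Fin n → ℤ) :=
  { d : Fin n → ℤ | castVec d ∈ (fun v => (realMat A).mulVec v) '' Fdom n }

/-- Multiplication of a Euclidean-space vector by a real matrix,
landing in Euclidean space (so that norms are the `ℓ²` norms). -/
noncomputable def mulVecE {n : ℕ} (B : Matrix (Fin n) (Fin n) ℝ)
    (v : EuclideanSpace ℝ (Fin n)) : EuclideanSpace ℝ (Fin n) :=
  (WithLp.equiv 2 (Fin n → ℝ)).symm (B.mulVec ((WithLp.equiv 2 (Fin n → ℝ)) v))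

/-- The smallest singular value of `A` is greater than `c`: equivalently,
`‖Av‖ > c` for every unit vector `v` (Euclidean norm). -/
noncomputable def MinSingValGT {n : ℕ} (A : Matrix (Fin n) (Fin n) ℤ) (c : ℝ) : Prop :=
  ∀ v : EuclideanSpace ℝ (Fin n), ‖v‖ = 1 → c < ‖mulVecE (realMat A) v‖

/-- Vectors expressible by a radix expansion of length at most `k`. -/
def DAk {n : ℕ} (A : Matrix (Fin n) (Fin n) ℤ) (D : Set (Fin n → ℤ)) (k : ℕ) :
    Set (Fin n → ℤ) :=
  { x : Fin n → ℤ | ∃ d : ℕ → (Fin n → ℤ), (∀ j < k, d j ∈ D) ∧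
      x = ∑ j ∈ Finset.range k, (A ^ j).mulVec (d j) }

/-- `T` tiles `ℝ^n` under translation by `ℤ^n`. -/
def TilesRn {n : ℕ} (T : Set (Fin n → ℝ)) : Prop :=
  (⋃ k : Fin n → ℤ, (fun x => x + castVec k) '' T) = Set.univ ∧
  ∀ k₁ k₂ : Fin n → ℤ, k₁ ≠ k₂ →
    volume (((fun x => x + castVec k₁) '' T) ∩ ((fun x => x + castVec k₂) '' T)) = 0

/-! Write `x = A t` with `t ∈ ℝⁿ` and round `t` coordinatewise to `y ∈ ℤⁿ`. Then
`t - y ∈ [-1/2, 1/2)ⁿ`, so `d = x - A y = A (t - y)` is a digit, while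
`‖y‖ ≤ 2 ‖t‖ < ‖A t‖ = ‖x‖` because `A` stretches every vector by more than `2`.
Peeling off digits therefore strictly decreases `‖x‖²`, an integer, until `x = 0`. -/

open WithLp Matrix

lemma abs_round_le_two_mul_abs (t : ℝ) : |(round t : ℝ)| ≤ 2 * |t| := by
  have := round_le t 0
  simp only [Int.cast_zero, sub_zero] at this
  linarith [abs_sub_abs_le_abs_sub (round t : ℝ) t, abs_sub_comm t (round t : ℝ)]

lemma norm_toLp_round_le {ι : Type*} [Fintype ι] (t : ι → ℝ) :
    ‖toLp 2 (fun i => (round (t i) : ℝ))‖ ≤ 2 * ‖toLp 2 t‖ := by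
  refine (pow_le_pow_iff_left₀ (norm_nonneg _) (by positivity) two_ne_zero).mp ?_
  rw [mul_pow, EuclideanSpace.norm_sq_eq, EuclideanSpace.norm_sq_eq, Finset.mul_sum]
  refine Finset.sum_le_sum fun i _ => ?_
  simpa only [Real.norm_eq_abs, mul_pow, sq_abs]
    using pow_le_pow_left₀ (abs_nonneg _) (abs_round_le_two_mul_abs (t i)) 2

lemma castVec_mulVec {n : ℕ} (A : Matrix (Fin n) (Fin n) ℤ) (y : Fin n → ℤ) :
    castVec (A *ᵥ y) = realMat A *ᵥ castVec y := by
  funext i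
  simp [castVec, realMat, mulVec, dotProduct]

@[simp]
lemma castVec_zero {n : ℕ} : castVec (0 : Fin n → ℤ) = 0 := by
  funext
  simp [castVec]

lemma castVec_injective {n : ℕ} : Function.Injective (castVec (n := n)) :=
  fun _ _ h => funext fun i => Int.cast_injective (congrFun h i)

lemma sum_natAbs_sq_lt_of_norm_lt {n : ℕ} {x y : Fin n → ℤ}
    (h : ‖toLp 2 (castVec y)‖ < ‖toLp 2 (castVec x)‖) :
    ∑ i, (y i).natAbs ^ 2 < ∑ i, (x i).natAbs ^ 2 := by
  have norm_sq (z : Fin n → ℤ) :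
      ‖toLp 2 (castVec z)‖ ^ 2 = ((∑ i, (z i).natAbs ^ 2 : ℕ) : ℝ) := by
    simp [EuclideanSpace.norm_sq_eq, castVec, Nat.cast_natAbs]
  exact_mod_cast (norm_sq y ▸ norm_sq x ▸ pow_lt_pow_left₀ h (norm_nonneg _) two_ne_zero)

namespace MinSingValGT

variable {n : ℕ} {A : Matrix (Fin n) (Fin n) ℤ} {c : ℝ}

lemma mul_norm_lt (hA : MinSingValGT A c) {w : EuclideanSpace ℝ (Fin n)} (hw : w ≠ 0) :
    c * ‖w‖ < ‖mulVecE (realMat A) w‖ := by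
  have hw' : 0 < ‖w‖ := norm_pos_iff.mpr hw
  have hunit := hA (‖w‖⁻¹ • w) <| by
    rw [norm_smul, norm_inv, norm_norm, inv_mul_cancel₀ hw'.ne']
  have hsmul : mulVecE (realMat A) (‖w‖⁻¹ • w) = ‖w‖⁻¹ • mulVecE (realMat A) w := by
    simp [mulVecE, mulVec_smul]
  rw [hsmul, norm_smul, norm_inv, norm_norm, lt_inv_mul_iff₀ hw'] at hunit
  linarith

lemma mulVec_surjective (hA : MinSingValGT A c) (hc : 0 ≤ c) :
    Function.Surjective (realMat A).mulVec := by
  refine mulVec_surjective_iff_isUnit.mpr (mulVec_injective_iff_isUnit.mp ?_)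
  refine (injective_iff_map_eq_zero (realMat A).mulVecLin).mpr fun v hv => ?_
  by_contra hv0
  have := hA.mul_norm_lt (w := toLp 2 v) (by simpa using hv0)
  simp only [mulVecE, equiv_apply, equiv_symm_apply, mulVecLin_apply] at this hv
  simp only [hv, WithLp.toLp_zero, norm_zero] at this
  exact (mul_nonneg hc (norm_nonneg _)).not_gt this

end MinSingValGT

lemma zero_mem_digitF {n : ℕ} (A : Matrix (Fin n) (Fin n) ℤ) : 0 ∈ digitF A :=
  ⟨0, fun _ _ => by norm_num, by simp⟩

lemma sub_mulVec_round_mem_digitF {n : ℕ} (A : Matrix (Fin n) (Fin n) ℤ) {x : Fin n → ℤ}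
    {t : Fin n → ℝ} (ht : realMat A *ᵥ t = castVec x) :
    x - A *ᵥ (fun i => round (t i)) ∈ digitF A := by
  refine ⟨t - castVec fun i => round (t i), fun i _ => ?_, ?_⟩
  · exact round_eq_zero_iff.mp (by simp [castVec, round_sub_intCast])
  · show realMat A *ᵥ _ = _
    rw [mulVec_sub, ht, ← castVec_mulVec]
    funext i
    simp [castVec]

lemma MinSingValGT.exists_digit_norm_lt {n : ℕ} {A : Matrix (Fin n) (Fin n) ℤ}
    (hA : MinSingValGT A 2) {x : Fin n → ℤ} (hx : x ≠ 0) :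
    ∃ y, x - A *ᵥ y ∈ digitF A ∧ ‖toLp 2 (castVec y)‖ < ‖toLp 2 (castVec x)‖ := by
  obtain ⟨t, ht⟩ := hA.mulVec_surjective zero_le_two (castVec x)
  have ht0 : toLp 2 t ≠ 0 := fun h => hx <| castVec_injective <| by
    rw [castVec_zero, ← ht, show t = 0 from congrArg ofLp h, mulVec_zero]
  refine ⟨fun i => round (t i), sub_mulVec_round_mem_digitF A ht, ?_⟩
  calc ‖toLp 2 (castVec fun i => round (t i))‖ ≤ 2 * ‖toLp 2 t‖ := norm_toLp_round_le t
    _ < ‖mulVecE (realMat A) (toLp 2 t)‖ := hA.mul_norm_lt ht0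
    _ = ‖toLp 2 (castVec x)‖ := by simp [mulVecE, ht]

theorem yieldsRadix_of_descent {n : ℕ} (A : Matrix (Fin n) (Fin n) ℤ) (D : Set (Fin n → ℤ))
    (f : (Fin n → ℤ) → ℕ) (h0 : 0 ∈ D)
    (hstep : ∀ x, x ≠ 0 → ∃ y, x - A *ᵥ y ∈ D ∧ f y < f x) : YieldsRadix A D := by
  intro x
  induction hfx : f x using Nat.strong_induction_on generalizing x with
  | _ m ih =>
    by_cases hx : x = 0
    · exact ⟨0, fun _ => 0, fun _ _ => h0, by simp [hx]⟩
    obtain ⟨y, hd, hlt⟩ := hstep x hx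
    obtain ⟨N, d, hdD, hy⟩ := ih _ (hfx ▸ hlt) y rfl
    refine ⟨N + 1, fun | 0 => x - A *ᵥ y | j + 1 => d j, ?_, ?_⟩
    · rintro (_ | j) hj
      exacts [hd, hdD j (by omega)]
    · have hshift : ∑ j ∈ Finset.range (N + 1), (A ^ (j + 1)) *ᵥ d j = A *ᵥ y := by
        simp only [hy, mulVec_sum, mulVec_mulVec, pow_succ']
      rw [Finset.sum_range_succ', hshift]
      simp

theorem stmt_4_general {n : ℕ} (A : Matrix (Fin n) (Fin n) ℤ)
    (hμ : MinSingValGT A 2) :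
    YieldsRadix A (digitF A) :=
  yieldsRadix_of_descent A _ (fun x => ∑ i, (x i).natAbs ^ 2) (zero_mem_digitF A)
    fun _ hx => (hμ.exists_digit_norm_lt hx).imp
      fun _ ⟨hd, hlt⟩ => ⟨hd, sum_natAbs_sq_lt_of_norm_lt hlt⟩

/-- if the smallest singular value exceeds 2, then `A` yields a
radix representation with digit set `A([-1/2,1/2)^n) ∩ ℤ^n`. -/
theorem stmt_4 {n : ℕ} (A : Matrix (Fin n) (Fin n) ℤ)
    (hA : IsDilation A) (hμ : MinSingValGT A 2) :
    YieldsRadix A (digitF A) :=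
  stmt_4_general A hμ
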